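/- arXiv:1906.04631 — 2 statements merged into one kernel-verified Lean document; each statement's English description precedes it below -/
import Mathlib

section
/- For r ≥ 0, let cv_{1-α}(r) denote the (1-α)-quantile of |N(r, 1)|, the distribution of the absolute value of a normal random variable with mean r and variance 1, where 0 < α < 1/2. If Z is standard normal and |b| ≤ r, then P(|Z + b| ≤ cv_{1-α}(r)) ≥ 1 - α. -/
/-!
The quantile `cv` is attained: the cdf of a Gaussian is continuous, so the set of `t` with
`P(|Z + r| ≤ t) ≥ 1 - α` is closed, and it is nonempty and bounded below by `0` since
`0 < 1 - α < 1`. It then suffices that `P(|Z + b| ≤ t) = P(Z ∈ [-t - b, t - b])` does not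
increase when `|b|` grows to `r`. By symmetry of `Z` we may take `0 ≤ b ≤ r`; the window
`[-t - r, t - r]` gains `[-t - r, -t - b]` and loses `[t - r, t - b]`, and translating the
latter by `-2t` maps it onto the former while moving every point away from `0`, where the
density is smaller.
-/

open ProbabilityTheory MeasureTheory Set Filter Topology
open scoped NNReal

namespace ProbabilityTheory

section CDF

lemma nonneg_of_le_cdf_sub_cdf {μ : Measure ℝ} {c r t : ℝ} (hc : 0 < c)
    (h : c ≤ cdf μ (t - r) - cdf μ (-t - r)) : 0 ≤ t := by
  by_contra! ht
  linarith [monotone_cdf μ (show t - r ≤ -t - r by linarith)]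

variable {μ : Measure ℝ} [IsProbabilityMeasure μ]

lemma cdf_sub_cdf_eq_measureReal_Ioc {a b : ℝ} (hab : a ≤ b) :
    cdf μ b - cdf μ a = μ.real (Ioc a b) := by
  have h := (cdf μ).measure_Ioc a b
  rw [measure_cdf] at h
  rw [measureReal_def, h, ENNReal.toReal_ofReal (sub_nonneg.2 (monotone_cdf μ hab))]

lemma leftLim_cdf [NullSingletonClass μ] (x : ℝ) : Function.leftLim (cdf μ) x = cdf μ x := by
  have h := (cdf μ).measure_singleton x
  rw [measure_cdf, measure_singleton, eq_comm, ENNReal.ofReal_eq_zero, sub_nonpos] at h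
  exact le_antisymm ((monotone_cdf μ).leftLim_le le_rfl) h

@[fun_prop]
lemma continuous_cdf [NullSingletonClass μ] : Continuous (cdf μ) :=
  continuous_iff_continuousAt.2 fun x => (monotone_cdf μ).continuousAt_iff_leftLim_eq_rightLim.2
    (by rw [leftLim_cdf, (cdf μ).rightLim_eq])

lemma setOf_abs_add_le_eq_Icc (r t : ℝ) : {z : ℝ | |z + r| ≤ t} = Icc (-t - r) (t - r) := by
  ext z
  simp only [mem_ofPred_eq, mem_Icc, abs_le]
  constructor <;> rintro ⟨h₁, h₂⟩ <;> constructor <;> linarith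

lemma cdf_sub_cdf_eq_measureReal_abs_add_le [NullSingletonClass μ] (r : ℝ) {t : ℝ}
    (ht : 0 ≤ t) :
    cdf μ (t - r) - cdf μ (-t - r) = μ.real {z | |z + r| ≤ t} := by
  rw [cdf_sub_cdf_eq_measureReal_Ioc (by linarith), setOf_abs_add_le_eq_Icc,
    measureReal_congr Ioc_ae_eq_Icc]

lemma csInf_mem_setOf_le_cdf_sub_cdf [NullSingletonClass μ] {c : ℝ} (hc₀ : 0 < c)
    (hc₁ : c < 1) (r : ℝ) :
    sInf {t | c ≤ cdf μ (t - r) - cdf μ (-t - r)} ∈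
      {t | c ≤ cdf μ (t - r) - cdf μ (-t - r)} := by
  have hlim : Tendsto (fun t => cdf μ (t - r) - cdf μ (-t - r)) atTop (𝓝 (1 - 0)) :=
    ((tendsto_cdf_atTop μ).comp (tendsto_atTop_add_const_right _ _ tendsto_id)).sub
      ((tendsto_cdf_atBot μ).comp
        (tendsto_atBot_add_const_right _ _ tendsto_neg_atTop_atBot))
  have hne := (hlim.eventually_const_le (by simpa using hc₁)).exists
  have hclosed : IsClosed {t | c ≤ cdf μ (t - r) - cdf μ (-t - r)} :=
    isClosed_le continuous_const (by fun_prop)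
  exact hclosed.csInf_mem hne ⟨0, fun t ht => nonneg_of_le_cdf_sub_cdf hc₀ ht⟩

end CDF

section Gaussian

variable {v : ℝ≥0}

lemma gaussianPDFReal_zero_le_of_abs_le {x y : ℝ} (h : |x| ≤ |y|) :
    gaussianPDFReal 0 v y ≤ gaussianPDFReal 0 v x := by
  simp only [gaussianPDFReal, sub_zero]
  gcongr _ * Real.exp (-?_ / _)
  exact sq_le_sq.2 h

lemma measureReal_gaussianReal_Icc (m : ℝ) (hv : v ≠ 0) {a c : ℝ} (hac : a ≤ c) :
    (gaussianReal m v).real (Icc a c) = ∫ x in a..c, gaussianPDFReal m v x := by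
  rw [measureReal_def, gaussianReal_apply_eq_integral m hv, ENNReal.toReal_ofReal
    (setIntegral_nonneg measurableSet_Icc fun x _ => gaussianPDFReal_nonneg m v x),
    integral_Icc_eq_integral_Ioc, intervalIntegral.integral_of_le hac]

lemma gaussianReal_setOf_abs_add_neg_le (b t : ℝ) :
    gaussianReal 0 v {z | |z + -b| ≤ t} = gaussianReal 0 v {z | |z + b| ≤ t} := by
  conv_rhs => rw [← neg_zero, ← gaussianReal_map_neg, Measure.map_apply measurable_neg
    (measurableSet_le (by fun_prop) measurable_const)]
  congr 1
  ext z
  simp only [mem_ofPred_eq, mem_preimage]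
  rw [show -z + b = -(z + -b) by ring, abs_neg]

lemma integral_gaussianPDFReal_shift_le {t b r : ℝ} (ht : 0 ≤ t) (hb : 0 ≤ b)
    (hbr : b ≤ r) :
    ∫ x in (-t - r)..(-t - b), gaussianPDFReal 0 v x ≤
      ∫ x in (t - r)..(t - b), gaussianPDFReal 0 v x := by
  have hshift : ∫ x in (-t - r)..(-t - b), gaussianPDFReal 0 v x =
      ∫ x in (t - r)..(t - b), gaussianPDFReal 0 v (x - 2 * t) := by
    rw [intervalIntegral.integral_comp_sub_right]
    ring_nf
  rw [hshift]
  refine intervalIntegral.integral_mono_on (by linarith)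
    ((integrable_gaussianPDFReal 0 v).comp_sub_right _).intervalIntegrable
    (integrable_gaussianPDFReal 0 v).intervalIntegrable fun x hx => ?_
  exact gaussianPDFReal_zero_le_of_abs_le (sq_le_sq.1 (by nlinarith [hx.2]))

lemma measureReal_gaussianReal_Icc_le (hv : v ≠ 0) {t b r : ℝ} (ht : 0 ≤ t) (hb : 0 ≤ b)
    (hbr : b ≤ r) :
    (gaussianReal 0 v).real (Icc (-t - r) (t - r)) ≤
      (gaussianReal 0 v).real (Icc (-t - b) (t - b)) := by
  have hi (a c : ℝ) : IntervalIntegrable (gaussianPDFReal 0 v) volume a c :=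
    (integrable_gaussianPDFReal 0 v).intervalIntegrable
  rw [measureReal_gaussianReal_Icc 0 hv (by linarith),
    measureReal_gaussianReal_Icc 0 hv (by linarith),
    ← intervalIntegral.integral_add_adjacent_intervals (hi _ (-t - b)) (hi _ _),
    ← intervalIntegral.integral_add_adjacent_intervals (hi _ (t - r)) (hi _ (t - b))]
  linarith [integral_gaussianPDFReal_shift_le (v := v) ht hb hbr]

lemma measureReal_gaussianReal_abs_add_le_le (hv : v ≠ 0) {b r t : ℝ} (hbr : |b| ≤ r)
    (ht : 0 ≤ t) :
    (gaussianReal 0 v).real {z | |z + r| ≤ t} ≤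
      (gaussianReal 0 v).real {z | |z + b| ≤ t} := by
  have hsymm : (gaussianReal 0 v).real {z | |z + b| ≤ t} =
      (gaussianReal 0 v).real {z | |z + (|b|)| ≤ t} := by
    rcases abs_choice b with h | h
    · rw [h]
    · rw [measureReal_def, measureReal_def, h, ← gaussianReal_setOf_abs_add_neg_le]
  rw [hsymm, setOf_abs_add_le_eq_Icc, setOf_abs_add_le_eq_Icc]
  exact measureReal_gaussianReal_Icc_le hv ht (abs_nonneg b) hbr

end Gaussian

end ProbabilityTheory

theorem stmt7_general (α r b cv : ℝ) (hα : 0 < α) (hα2 : α < 1 / 2)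
    (hcv : cv = sInf {t : ℝ | 1 - α ≤
      cdf (gaussianReal 0 1) (t - r) - cdf (gaussianReal 0 1) (-t - r)})
    (hb : |b| ≤ r) :
    1 - α ≤ ((gaussianReal 0 1) {z : ℝ | |z + b| ≤ cv}).toReal := by
  have := nullSingletonClass_gaussianReal (μ := 0) one_ne_zero
  have hmem : cv ∈ {t : ℝ | 1 - α ≤
      cdf (gaussianReal 0 1) (t - r) - cdf (gaussianReal 0 1) (-t - r)} :=
    hcv ▸ csInf_mem_setOf_le_cdf_sub_cdf (by linarith) (by linarith) r
  have hcv₀ : 0 ≤ cv := nonneg_of_le_cdf_sub_cdf (by linarith) hmem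
  calc 1 - α ≤ cdf (gaussianReal 0 1) (cv - r) - cdf (gaussianReal 0 1) (-cv - r) := hmem
    _ = (gaussianReal 0 1).real {z | |z + r| ≤ cv} :=
      cdf_sub_cdf_eq_measureReal_abs_add_le r hcv₀
    _ ≤ (gaussianReal 0 1).real {z | |z + b| ≤ cv} :=
      measureReal_gaussianReal_abs_add_le_le one_ne_zero hb hcv₀

/-- Coverage of the bias-aware critical value: if cv is the (1-α)-quantile of
|N(r,1)| and |b| ≤ r, then P(|Z + b| ≤ cv) ≥ 1 - α for Z standard normal. -/
theorem stmt7 (α r b cv : ℝ) (hα : 0 < α) (hα2 : α < 1 / 2) (hr : 0 ≤ r)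
    (hcv : cv = sInf {t : ℝ | 1 - α ≤
      cdf (gaussianReal 0 1) (t - r) - cdf (gaussianReal 0 1) (-t - r)})
    (hb : |b| ≤ r) :
    1 - α ≤ ((gaussianReal 0 1) {z : ℝ | |z + b| ≤ cv}).toReal :=
  stmt7_general α r b cv hα hα2 hcv hb
end

section
/- Let x₀ < x₁ < ... < x_k be distinct reals and t ∈ ℝ. Define β_k(t) = Σ_{j : x_j > t} Π_{l ≠ j} (x_j - t)/(x_j - x_l) (the leading coefficient of the polynomial of degree k interpolating (xᵢ, 1{xᵢ ≥ t}(xᵢ - t)^k)). Then β_k(t), viewed as a function of the largest node x_k, is monotonically nondecreasing in x_k on (x_{k-1}, ∞). -/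
/-!
β_k(t) is the divided difference at the nodes of the truncated power `(· - t)₊^k`. Moving the
last node from y₁ to y₂ changes a divided difference by `y₂ - y₁` times the divided difference at
all the nodes together with both y₁ and y₂, so it suffices that a divided difference of
`(· - t)₊^m` at `m + 2` nodes (a B-spline value) is nonnegative. With a < b the extreme nodes,
the Leibniz rule for the factor `x - t` writes `(b - a)` times it as `(b - t)` times the one without
a plus `(t - a)` times the one without b, both for `(· - t)₊^(m-1)`; for t outside [a, b] the
function is a polynomial of degree m or zero on the nodes, whose divided difference vanishes.
-/

open Finset

/-- The leading coefficient β_k(t) = Σ_{j : x_j > t} Π_{l ≠ j} (x_j - t)/(x_j - x_l)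
of the degree-k interpolant of the truncated power function. -/
noncomputable def betaCoeff (k : ℕ) (t : ℝ) (z : Fin k → ℝ) : ℝ :=
  ∑ j ∈ Finset.univ.filter (fun j => t < z j),
    ∏ l ∈ Finset.univ.erase j, (z j - t) / (z j - z l)

open Polynomial

theorem Finset.prod_erase_insert_of_mem {α β : Type*} [DecidableEq α] [CommMonoid β]
    {s : Finset α} {a c : α} (f : α → β) (ha : a ∉ s) (hc : c ∈ s) :
    ∏ d ∈ (insert a s).erase c, f d = f a * ∏ d ∈ s.erase c, f d := by
  rw [erase_insert_of_ne (ne_of_mem_of_not_mem hc ha).symm, prod_insert (by simp [ha])]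

theorem Finset.exists_eq_insert_insert_of_two_le_card {α : Type*} [LinearOrder α]
    {S : Finset α} (hS : 2 ≤ #S) :
    ∃ a b s, a < b ∧ (∀ c ∈ s, a < c ∧ c < b) ∧ S = insert a (insert b s) := by
  have hne : S.Nonempty := card_pos.mp (by omega)
  refine ⟨S.min' hne, S.max' hne, (S.erase (S.min' hne)).erase (S.max' hne),
    min'_lt_max'_of_card S hS, fun c hc => ?_, ?_⟩
  · obtain ⟨hcb, hca, hc⟩ := mem_erase.mp hc |>.imp_right mem_erase.mp
    exact ⟨(S.min'_le c hc).lt_of_ne' hca, (S.le_max' c hc).lt_of_ne hcb⟩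
  · rw [insert_erase (mem_erase.mpr ⟨(min'_lt_max'_of_card S hS).ne', max'_mem S hne⟩),
      insert_erase (min'_mem S hne)]

theorem Fin.image_snoc_univ {α : Type*} [DecidableEq α] {n : ℕ} (x : Fin n → α) (y : α) :
    univ.image (Fin.snoc x y : Fin (n + 1) → α) = insert y (univ.image x) :=
  coe_injective (by push_cast [Set.image_univ, Fin.range_snoc]; rfl)

section Field

variable {K : Type*} [Field K] [DecidableEq K]

def divDiff (s : Finset K) (f : K → K) : K :=
  ∑ a ∈ s, f a / ∏ b ∈ s.erase a, (a - b)

theorem divDiff_congr {s : Finset K} {f g : K → K} (h : ∀ x ∈ s, f x = g x) :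
    divDiff s f = divDiff s g :=
  sum_congr rfl fun a ha => by rw [h a ha]

@[simp]
theorem divDiff_singleton (a : K) (f : K → K) : divDiff {a} f = f a := by
  simp [divDiff]

theorem divDiff_eval_eq_coeff (s : Finset K) {P : K[X]} (hP : P.degree < #s) :
    divDiff s (fun x => P.eval x) = P.coeff (#s - 1) :=
  (Lagrange.coeff_eq_sum (v := id) (Set.injOn_id _) hP).symm

theorem divDiff_pow_sub_eq_zero (s : Finset K) (t : K) {m : ℕ} (hm : m + 1 < #s) :
    divDiff s (fun x => (x - t) ^ m) = 0 := by
  have hdeg : ((X - C t) ^ m).natDegree = m := by simp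
  have h := divDiff_eval_eq_coeff s (P := (X - C t) ^ m)
    (by rw [degree_eq_natDegree (pow_ne_zero _ (X_sub_C_ne_zero t)), hdeg]
        exact_mod_cast (by omega))
  simpa [coeff_eq_zero_of_natDegree_lt (hdeg.trans_lt (by omega : m < #s - 1))] using h

theorem divDiff_insert_sub_mul {s : Finset K} {a : K} (ha : a ∉ s) (t : K) (g : K → K) :
    divDiff (insert a s) (fun x => (x - t) * g x)
      = (a - t) * divDiff (insert a s) g + divDiff s g := by
  -- split `x - t = (a - t) + (x - a)`; the factor `x - a` cancels the node a
  have hs : ∑ c ∈ insert a s, (c - a) * g c / ∏ d ∈ (insert a s).erase c, (c - d)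
      = divDiff s g := by
    rw [sum_insert ha, sub_self, zero_mul, zero_div, zero_add, divDiff]
    refine sum_congr rfl fun c hc => ?_
    rw [prod_erase_insert_of_mem (c - ·) ha hc,
      mul_div_mul_left _ _ (sub_ne_zero.mpr (ne_of_mem_of_not_mem hc ha))]
  rw [← hs, divDiff, divDiff, mul_sum, ← sum_add_distrib]
  exact sum_congr rfl fun c _ => by ring

-- Both identities below compare the Leibniz rule anchored at a and at b.
theorem sub_mul_divDiff_insert_insert {s : Finset K} {a b : K} (ha : a ∉ s) (hb : b ∉ s)
    (hab : a ≠ b) (f : K → K) :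
    (b - a) * divDiff (insert a (insert b s)) f
      = divDiff (insert b s) f - divDiff (insert a s) f := by
  have h₁ := divDiff_insert_sub_mul (a := a) (s := insert b s) (by simp [ha, hab]) a f
  have h₂ := divDiff_insert_sub_mul (a := b) (s := insert a s) (by simp [hb, hab.symm]) a f
  rw [insert_comm b a] at h₂
  linear_combination h₁ - h₂

theorem sub_mul_divDiff_insert_insert_sub_mul {s : Finset K} {a b : K} (ha : a ∉ s)
    (hb : b ∉ s) (hab : a ≠ b) (t : K) (g : K → K) :
    (b - a) * divDiff (insert a (insert b s)) (fun x => (x - t) * g x)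
      = (b - t) * divDiff (insert b s) g + (t - a) * divDiff (insert a s) g := by
  have h₁ := divDiff_insert_sub_mul (a := a) (s := insert b s) (by simp [ha, hab]) t g
  have h₂ := divDiff_insert_sub_mul (a := b) (s := insert a s) (by simp [hb, hab.symm]) t g
  rw [insert_comm b a] at h₂
  linear_combination (b - t) * h₁ - (a - t) * h₂

end Field

section Ordered

variable {K : Type*} [Field K] [LinearOrder K]

def truncPow (t : K) (m : ℕ) (x : K) : K :=
  if t < x then (x - t) ^ m else 0

theorem truncPow_succ (t : K) (m : ℕ) :
    truncPow t (m + 1) = fun x => (x - t) * truncPow t m x := by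
  funext x
  unfold truncPow
  split_ifs <;> ring

theorem monotone_truncPow_zero [IsStrictOrderedRing K] (t : K) : Monotone (truncPow t 0) := by
  intro x y hxy
  simp only [truncPow, pow_zero]
  split_ifs with hx hy hy
  · exact le_rfl
  · exact absurd (hx.trans_le hxy) hy
  · exact zero_le_one
  · exact le_rfl

theorem divDiff_truncPow_nonneg [IsStrictOrderedRing K] (t : K) :
    ∀ (m : ℕ) (S : Finset K), #S = m + 2 → 0 ≤ divDiff S (truncPow t m)
  | m, S, hS => by
    obtain ⟨a, b, s, hab, hs, rfl⟩ := exists_eq_insert_insert_of_two_le_card (hS ▸ le_add_self)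
    have ha : a ∉ s := fun h => (hs a h).1.false
    have hb : b ∉ s := fun h => (hs b h).2.false
    have hcard : #s = m := by
      rw [card_insert_of_notMem (by simp [ha, hab.ne]), card_insert_of_notMem hb] at hS
      omega
    refine nonneg_of_mul_nonneg_right ?_ (sub_pos.mpr hab)
    cases m with
    | zero =>
      obtain rfl : s = ∅ := card_eq_zero.mp hcard
      rw [sub_mul_divDiff_insert_insert ha hb hab.ne, insert_empty, insert_empty,
        divDiff_singleton, divDiff_singleton, sub_nonneg]
      exact monotone_truncPow_zero t hab.le
    | succ m =>
      have hbounds : ∀ x ∈ insert a (insert b s), a ≤ x ∧ x ≤ b := by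
        simp only [forall_mem_insert]
        exact ⟨⟨le_rfl, hab.le⟩, ⟨hab.le, le_rfl⟩, fun c hc => ⟨(hs c hc).1.le, (hs c hc).2.le⟩⟩
      rcases lt_or_ge t a with hta | hat
      · rw [divDiff_congr (f := truncPow t (m + 1)) (g := fun x => (x - t) ^ (m + 1))
          fun x hx => if_pos (hta.trans_le (hbounds x hx).1),
          divDiff_pow_sub_eq_zero _ _ (by omega), mul_zero]
      rcases le_or_gt b t with hbt | htb
      · refine (mul_eq_zero_of_right _ (sum_eq_zero fun x hx => ?_)).ge
        rw [truncPow, if_neg ((hbounds x hx).2.trans hbt).not_gt, zero_div]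
      have hb' : #(insert b s) = m + 2 := by rw [card_insert_of_notMem hb, hcard]
      have ha' : #(insert a s) = m + 2 := by rw [card_insert_of_notMem ha, hcard]
      rw [truncPow_succ, sub_mul_divDiff_insert_insert_sub_mul ha hb hab.ne]
      exact add_nonneg
        (mul_nonneg (sub_nonneg.mpr htb.le) (divDiff_truncPow_nonneg t m _ hb'))
        (mul_nonneg (sub_nonneg.mpr hat) (divDiff_truncPow_nonneg t m _ ha'))

end Ordered

theorem betaCoeff_succ_eq_divDiff (n : ℕ) (t : ℝ) {z : Fin (n + 1) → ℝ}
    (hz : Function.Injective z) :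
    betaCoeff (n + 1) t z = divDiff (univ.image z) (truncPow t n) := by
  rw [betaCoeff, divDiff, sum_image hz.injOn, sum_filter]
  refine sum_congr rfl fun j _ => ?_
  rw [← image_erase hz, prod_image hz.injOn, truncPow]
  split_ifs
  · rw [prod_div_distrib, prod_const, card_erase_of_mem (mem_univ j), card_univ,
      Fintype.card_fin, Nat.add_sub_cancel]
  · rw [zero_div]

/-- β_k(t) is monotonically nondecreasing in the largest node. -/
theorem stmt11 (k : ℕ) (x : Fin k → ℝ) (t : ℝ) (hx : StrictMono x)
    (y₁ y₂ : ℝ) (hy₁ : ∀ i, x i < y₁) (h12 : y₁ ≤ y₂) :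
    betaCoeff (k + 1) t (Fin.snoc x y₁) ≤ betaCoeff (k + 1) t (Fin.snoc x y₂) := by
  obtain rfl | hlt := h12.eq_or_lt
  · exact le_rfl
  have hbeta : ∀ y ∉ univ.image x,
      betaCoeff (k + 1) t (Fin.snoc x y) = divDiff (insert y (univ.image x)) (truncPow t k) :=
    fun y hy => by
      rw [betaCoeff_succ_eq_divDiff k t
        (Fin.snoc_injective_of_injective hx.injective (by simpa using hy)), Fin.image_snoc_univ]
  have hy₁' : y₁ ∉ univ.image x := by simpa using fun i => (hy₁ i).ne
  have hy₂' : y₂ ∉ univ.image x := by simpa using fun i => ((hy₁ i).trans hlt).ne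
  rw [hbeta y₁ hy₁', hbeta y₂ hy₂', ← sub_nonneg, ← sub_mul_divDiff_insert_insert hy₁' hy₂' hlt.ne]
  refine mul_nonneg (sub_nonneg.mpr h12) (divDiff_truncPow_nonneg t k _ ?_)
  rw [card_insert_of_notMem (by simp [hy₁', hlt.ne]), card_insert_of_notMem hy₂',
    card_image_of_injective _ hx.injective, card_univ, Fintype.card_fin]
end
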